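/- Let μ, s ∈ ℝ, let w : ℝ → ISO⁺(2,1) ⊂ GL₄(ℝ) and Φ, T : ℝ → ℝ be differentiable, and set w̃(ε) = w(ε)·exp( −Φ(ε)Ĵ₀ + T(ε)P̂₀ ). Then for every ε: ⟨ μĴ₀ + sP̂₀, w̃(ε)⁻¹w̃′(ε) ⟩ = ⟨ μĴ₀ + sP̂₀, w(ε)⁻¹w′(ε) ⟩ + μ·T′(ε) − s·Φ′(ε). (Section 5.2: under the gauge transformation w ↦ w·(e^{−ΦJ₀}, TP₀) the centre-of-mass symplectic potential ⟨μJ₀ + sP₀, w⁻¹δw⟩ changes by μδT − sδΦ; together with the compensating change of Θ this exhibits (5.10) as a gauge transformation.) -/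

import Mathlib

open Matrix

noncomputable section

attribute [local instance] Matrix.normedAddCommGroup Matrix.normedSpace

/-- The Minkowski metric matrix diag(1,-1,-1). -/
def η3 : Matrix (Fin 3) (Fin 3) ℝ := Matrix.diagonal ![1, -1, -1]

/-- The Minkowski bilinear form on ℝ³. -/
def mink (x y : Fin 3 → ℝ) : ℝ := x 0 * y 0 - x 1 * y 1 - x 2 * y 2

/-- The Minkowski cross product. -/
def crossM (p q : Fin 3 → ℝ) : Fin 3 → ℝ :=
  ![p 1 * q 2 - p 2 * q 1, p 0 * q 2 - p 2 * q 0, p 1 * q 0 - p 0 * q 1]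

/-- The map M : ℝ³ → so(2,1), M(p)q = p ×_η q. -/
def Mmap (p : Fin 3 → ℝ) : Matrix (Fin 3) (Fin 3) ℝ :=
  !![0, -(p 2), p 1; -(p 2), 0, p 0; p 1, -(p 0), 0]

/-- The inverse m : so(2,1) → ℝ³ of M (extracted entrywise). -/
def mser (X : Matrix (Fin 3) (Fin 3) ℝ) : Fin 3 → ℝ := ![X 1 2, X 0 2, -(X 0 1)]

/-- Membership in SO⁺(2,1). -/
def IsSOplus (v : Matrix (Fin 3) (Fin 3) ℝ) : Prop :=
  vᵀ * η3 * v = η3 ∧ v.det = 1 ∧ 0 < v 0 0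

/-- so(2,1) as a set of 3×3 matrices. -/
def IsSO21 (X : Matrix (Fin 3) (Fin 3) ℝ) : Prop := Xᵀ * η3 + η3 * X = 0

/-- The 4×4 Poincaré matrix [[v,x],[0,1]]. -/
def pmat (v : Matrix (Fin 3) (Fin 3) ℝ) (x : Fin 3 → ℝ) : Matrix (Fin 4) (Fin 4) ℝ :=
  Matrix.of fun i j =>
    if hi : (i : ℕ) < 3 then
      if hj : (j : ℕ) < 3 then v ⟨i, hi⟩ ⟨j, hj⟩ else x ⟨i, hi⟩
    else if (j : ℕ) < 3 then 0 else 1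

/-- The 4×4 iso(2,1) matrix [[X,b],[0,0]]. -/
def amat (X : Matrix (Fin 3) (Fin 3) ℝ) (b : Fin 3 → ℝ) : Matrix (Fin 4) (Fin 4) ℝ :=
  Matrix.of fun i j =>
    if hi : (i : ℕ) < 3 then
      if hj : (j : ℕ) < 3 then X ⟨i, hi⟩ ⟨j, hj⟩ else b ⟨i, hi⟩
    else 0

/-- Membership in the Poincaré group ISO⁺(2,1) ⊂ GL₄(ℝ). -/
def IsISO (g : Matrix (Fin 4) (Fin 4) ℝ) : Prop :=
  ∃ v x, IsSOplus v ∧ g = pmat v x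

/-- Membership in the Lie algebra iso(2,1). -/
def IsISOAlg (ξ : Matrix (Fin 4) (Fin 4) ℝ) : Prop :=
  ∃ X b, IsSO21 X ∧ ξ = amat X b

/-- Standard basis vectors of ℝ³. -/
def e3 (a : Fin 3) : Fin 3 → ℝ := Pi.single a 1

/-- The rotation/boost generators Ĵ_a of iso(2,1). -/
def Jhat (a : Fin 3) : Matrix (Fin 4) (Fin 4) ℝ := amat (Mmap (e3 a)) 0

/-- The translation generators P̂_a of iso(2,1). -/
def Phat (a : Fin 3) : Matrix (Fin 4) (Fin 4) ℝ := amat 0 (e3 a)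

/-- The invariant pairing ⟨[[X,b],0],[[Y,c],0]⟩ = η(m X, c) + η(m Y, b) on iso(2,1). -/
def pairIso (ξ ζ : Matrix (Fin 4) (Fin 4) ℝ) : ℝ :=
  mink ![ξ 1 2, ξ 0 2, -(ξ 0 1)] ![ζ 0 3, ζ 1 3, ζ 2 3]
  + mink ![ζ 1 2, ζ 0 2, -(ζ 0 1)] ![ξ 0 3, ξ 1 3, ξ 2 3]

/-- Ordered product U_k(ε) = u_{k-1}(ε)⋯u_0(ε) (with U_0 = 1). -/
def ordProd {n : ℕ} (u : ℕ → ℝ → Matrix (Fin n) (Fin n) ℝ) : ℕ → ℝ → Matrix (Fin n) (Fin n) ℝ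
  | 0 => fun _ => 1
  | k + 1 => fun ε => u k ε * ordProd u k ε

/-!
Write `J = Ĵ₀`, `P = P̂₀` and `G = exp (-Φ J + T P)`. As `J P = P J = 0`, the exponents commute, so
`G⁻¹ G' = -Φ' J + T' P` and `w̃⁻¹ w̃' = G⁻¹ (w⁻¹ w') G + (-Φ' J + T' P)`. Pairing the second term
with `μ J + s P` gives `μ T' - s Φ'`, because `⟨J, P⟩ = 1` and `⟨J, J⟩ = ⟨P, P⟩ = 0`.

For the first term: `⟨μ J + s P, Y⟩ = μ Y₀₃ + s Y₁₂`. Since `G` commutes with `J` and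
`G P = P G = P`, `G` is a `2 × 2` block on `e₁, e₂` together with a translation along `e₀`, and
conjugating an element `Y` of `iso(2,1)` by such a `G` changes neither `Y₀₃` nor `Y₁₂`. That
`w⁻¹ w'` lies in `iso(2,1)` follows by differentiating the equations `w ηP wᵀ = ηP`, with
`ηP = diag(1,-1,-1,0)`, and `E₃₃ w = E₃₃`, which hold on `ISO⁺(2,1)`.
-/

open NormedSpace

section BanachAlgebra

variable {𝔸 : Type*} [NormedRing 𝔸]

theorem exp_mul_of_mul_eq_zero [NormedAlgebra ℚ 𝔸] [CompleteSpace 𝔸] {x y : 𝔸} (h : x * y = 0) :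
    exp x * y = y := by
  refine ((exp_series_hasSum_exp' (𝕂 := ℚ) x).mul_right y).unique (hasSum_single 0 ?_) |>.trans ?_
  · rintro (_ | n) hn
    · exact absurd rfl hn
    · rw [smul_mul_assoc, pow_succ, mul_assoc, h, mul_zero, smul_zero]
  · simp

theorem mul_exp_of_mul_eq_zero [NormedAlgebra ℚ 𝔸] [CompleteSpace 𝔸] {x y : 𝔸} (h : y * x = 0) :
    y * exp x = y := by
  refine ((exp_series_hasSum_exp' (𝕂 := ℚ) x).mul_left y).unique (hasSum_single 0 ?_) |>.trans ?_
  · rintro (_ | n) hn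
    · exact absurd rfl hn
    · rw [mul_smul_comm, pow_succ', ← mul_assoc, h, zero_mul, smul_zero]
  · simp

variable {𝕂 : Type*} [RCLike 𝕂] [NormedAlgebra 𝕂 𝔸] [CompleteSpace 𝔸]

theorem hasDerivAt_exp_smul_add_smul {A B : 𝔸} (hAB : Commute A B) {φ τ : 𝕂 → 𝕂} {φ' τ' t : 𝕂}
    (hφ : HasDerivAt φ φ' t) (hτ : HasDerivAt τ τ' t) :
    HasDerivAt (fun s => exp (φ s • A + τ s • B))
      (exp (φ t • A + τ t • B) * (φ' • A + τ' • B)) t := by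
  let : NormedAlgebra ℚ 𝔸 := NormedAlgebra.restrictScalars ℚ 𝕂 𝔸
  have hsplit (s : 𝕂) : exp (φ s • A + τ s • B) = exp (φ s • A) * exp (τ s • B) :=
    exp_add_of_commute ((hAB.smul_left _).smul_right _)
  have hAexp : A * exp (τ t • B) = exp (τ t • B) * A := ((hAB.smul_right _).exp_right).eq
  simp_rw [hsplit]
  refine (((hasDerivAt_exp_smul_const A (φ t)).scomp t hφ).fun_mul
    ((hasDerivAt_exp_smul_const B (τ t)).scomp t hτ)).congr_deriv ?_
  simp only [Function.comp_apply, mul_add, smul_mul_assoc, mul_smul_comm, mul_assoc, hAexp]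

end BanachAlgebra

theorem Jhat_zero_eq : Jhat 0 = !![0, 0, 0, 0; 0, 0, 1, 0; 0, -1, 0, 0; 0, 0, 0, 0] := by
  ext i j
  fin_cases i <;> fin_cases j <;> simp [Jhat, amat, Mmap, e3]

theorem Phat_zero_eq : Phat 0 = !![0, 0, 0, 1; 0, 0, 0, 0; 0, 0, 0, 0; 0, 0, 0, 0] := by
  ext i j
  fin_cases i <;> fin_cases j <;> simp [Phat, amat, e3]

theorem Jhat_zero_mul_Phat_zero : Jhat 0 * Phat 0 = 0 := by
  rw [Jhat_zero_eq, Phat_zero_eq]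
  ext i j
  fin_cases i <;> fin_cases j <;> simp [mul_apply, Fin.sum_univ_four]

theorem Phat_zero_mul_Jhat_zero : Phat 0 * Jhat 0 = 0 := by
  rw [Jhat_zero_eq, Phat_zero_eq]
  ext i j
  fin_cases i <;> fin_cases j <;> simp [mul_apply, Fin.sum_univ_four]

theorem Phat_zero_mul_self : Phat 0 * Phat 0 = 0 := by
  rw [Phat_zero_eq]
  ext i j
  fin_cases i <;> fin_cases j <;> simp [mul_apply, Fin.sum_univ_four]

theorem commute_Jhat_zero_Phat_zero : Commute (Jhat 0) (Phat 0) := by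
  rw [Commute, SemiconjBy, Jhat_zero_mul_Phat_zero, Phat_zero_mul_Jhat_zero]

theorem pairIso_add_right (ξ ζ₁ ζ₂ : Matrix (Fin 4) (Fin 4) ℝ) :
    pairIso ξ (ζ₁ + ζ₂) = pairIso ξ ζ₁ + pairIso ξ ζ₂ := by
  simp only [pairIso, mink, Matrix.add_apply, cons_val_zero, cons_val_one, cons_val]
  ring

theorem pairIso_smul_Jhat_zero_add_smul_Phat_zero (μ s : ℝ) (ζ : Matrix (Fin 4) (Fin 4) ℝ) :
    pairIso (μ • Jhat 0 + s • Phat 0) ζ = μ * ζ 0 3 + s * ζ 1 2 := by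
  simp [pairIso, mink, Jhat_zero_eq, Phat_zero_eq]
  ring

theorem pairIso_Jhat_zero_Phat_zero (μ s a b : ℝ) :
    pairIso (μ • Jhat 0 + s • Phat 0) (a • Jhat 0 + b • Phat 0) = μ * b + s * a := by
  rw [pairIso_smul_Jhat_zero_add_smul_Phat_zero]
  simp [Jhat_zero_eq, Phat_zero_eq]

theorem η3_mul_self : η3 * η3 = 1 := by
  ext i j
  fin_cases i <;> fin_cases j <;> simp [η3]

theorem mul_η3_mul_transpose_of_transpose_mul {v : Matrix (Fin 3) (Fin 3) ℝ}
    (hv : vᵀ * η3 * v = η3) : v * η3 * vᵀ = η3 := by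
  have h : v * (η3 * vᵀ * η3) = 1 := mul_eq_one_comm.mp <| by
    rw [Matrix.mul_assoc, Matrix.mul_assoc, ← Matrix.mul_assoc vᵀ, hv, η3_mul_self]
  calc v * η3 * vᵀ = v * (η3 * vᵀ * η3) * η3 := by
        simp only [Matrix.mul_assoc, η3_mul_self, Matrix.mul_one]
    _ = η3 := by rw [h, Matrix.one_mul]

def ηP : Matrix (Fin 4) (Fin 4) ℝ := diagonal ![1, -1, -1, 0]

theorem pmat_mul_ηP_mul_transpose {v : Matrix (Fin 3) (Fin 3) ℝ} (x : Fin 3 → ℝ)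
    (hv : v * η3 * vᵀ = η3) : pmat v x * ηP * (pmat v x)ᵀ = ηP := by
  have e := fun i j => congrFun (congrFun hv i) j
  simp [η3, mul_apply, Fin.sum_univ_three, Fin.forall_fin_succ] at e
  ext i j
  fin_cases i <;> fin_cases j <;> simp [pmat, ηP, mul_apply, Fin.sum_univ_four] <;> linarith

theorem single_mul_pmat (v : Matrix (Fin 3) (Fin 3) ℝ) (x : Fin 3 → ℝ) :
    single 3 3 1 * pmat v x = single 3 3 1 := by
  ext i j
  fin_cases i <;> fin_cases j <;> simp [pmat, single, mul_apply, Fin.sum_univ_four]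

theorem det_pmat (v : Matrix (Fin 3) (Fin 3) ℝ) (x : Fin 3 → ℝ) : (pmat v x).det = v.det := by
  have hminor : (pmat v x).submatrix (Fin.last 3).succAbove (Fin.last 3).succAbove = v := by
    ext i j
    fin_cases i <;> fin_cases j <;> rfl
  rw [det_succ_row _ (Fin.last 3), Fin.sum_univ_castSucc, hminor]
  norm_num [pmat]

namespace IsISO

variable {g : Matrix (Fin 4) (Fin 4) ℝ}

theorem mul_ηP_mul_transpose (hg : IsISO g) : g * ηP * gᵀ = ηP := by
  obtain ⟨v, x, ⟨hv, -⟩, rfl⟩ := hg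
  exact pmat_mul_ηP_mul_transpose x (mul_η3_mul_transpose_of_transpose_mul hv)

theorem single_mul (hg : IsISO g) : single 3 3 1 * g = single 3 3 1 := by
  obtain ⟨v, x, -, rfl⟩ := hg
  exact single_mul_pmat v x

theorem isUnit_det (hg : IsISO g) : IsUnit g.det := by
  obtain ⟨v, x, ⟨-, hdet, -⟩, rfl⟩ := hg
  simp [det_pmat, hdet]

end IsISO

def FixesJhatPhat (G : Matrix (Fin 4) (Fin 4) ℝ) : Prop :=
  G * Phat 0 = Phat 0 ∧ Phat 0 * G = Phat 0 ∧ Commute G (Jhat 0)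

theorem FixesJhatPhat.eq_blocks {G : Matrix (Fin 4) (Fin 4) ℝ} (hG : FixesJhatPhat G) :
    G = !![1, 0, 0, G 0 3; 0, G 1 1, G 1 2, 0; 0, -G 1 2, G 1 1, 0; 0, 0, 0, 1] := by
  obtain ⟨hGP, hPG, hGJ⟩ := hG
  rw [Phat_zero_eq] at hGP hPG
  rw [Jhat_zero_eq] at hGJ
  have eGP := fun i j => congrFun (congrFun hGP i) j
  have ePG := fun i j => congrFun (congrFun hPG i) j
  have eGJ := fun i j => congrFun (congrFun hGJ.eq i) j
  simp [mul_apply, Fin.sum_univ_four, Fin.forall_fin_succ] at eGP ePG eGJ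
  ext i j
  fin_cases i <;> fin_cases j <;> simp <;> linarith

theorem entries_of_mul_ηP_add_ηP_mul_transpose {Y : Matrix (Fin 4) (Fin 4) ℝ}
    (hY : Y * ηP + ηP * Yᵀ = 0) (hY3 : single 3 3 1 * Y = 0) :
    Y 0 0 = 0 ∧ Y 1 1 = 0 ∧ Y 2 2 = 0 ∧ Y 2 1 = -Y 1 2 ∧ Y 3 0 = 0 ∧ Y 3 3 = 0 := by
  have e (i j : Fin 4) := congrFun (congrFun hY i) j
  have e3 (j : Fin 4) := congrFun (congrFun hY3 3) j
  have h00 := e 0 0; have h11 := e 1 1; have h22 := e 2 2; have h12 := e 1 2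
  have h30 := e3 0; have h33 := e3 3
  simp [ηP, mul_apply, Fin.sum_univ_four] at h00 h11 h22 h12 h30 h33
  exact ⟨by linarith, by linarith, by linarith, by linarith, by linarith, by linarith⟩

theorem pairIso_conj_of_fixesJhatPhat {G H Y : Matrix (Fin 4) (Fin 4) ℝ} (μ s : ℝ)
    (hG : FixesJhatPhat G) (hH : FixesJhatPhat H) (hHG : H * G = 1)
    (hY : Y * ηP + ηP * Yᵀ = 0) (hY3 : single 3 3 1 * Y = 0) :
    pairIso (μ • Jhat 0 + s • Phat 0) (H * Y * G) = pairIso (μ • Jhat 0 + s • Phat 0) Y := by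
  obtain ⟨hY00, hY11, hY22, hY21, hY30, hY33⟩ := entries_of_mul_ηP_add_ηP_mul_transpose hY hY3
  have h03 : (H * Y * G) 0 3 = Y 0 3 := by
    rw [hG.eq_blocks, hH.eq_blocks]
    simp [mul_apply, vecMul, dotProduct, Fin.sum_univ_four, hY00, hY30, hY33]
  have h12 : (H * Y * G) 1 2 = Y 1 2 := by
    have eHG := congrFun (congrFun hHG 1) 1
    rw [hG.eq_blocks, hH.eq_blocks] at eHG ⊢
    simp [mul_apply, vecMul, dotProduct, Fin.sum_univ_four, hY11, hY22, hY21] at eHG ⊢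
    linear_combination Y 1 2 * eHG
  rw [pairIso_smul_Jhat_zero_add_smul_Phat_zero, pairIso_smul_Jhat_zero_add_smul_Phat_zero, h03,
    h12]

section MatrixCalculus

variable {n : Type*} [Fintype n]

theorem HasDerivAt.matrix_transpose {w : ℝ → Matrix n n ℝ} {D : Matrix n n ℝ} {t : ℝ}
    (hw : HasDerivAt w D t) : HasDerivAt (fun s => (w s)ᵀ) Dᵀ t :=
  hasDerivAt_pi.2 fun i => hasDerivAt_pi.2 fun j => hasDerivAt_pi.1 (hasDerivAt_pi.1 hw j) i

-- Products of matrices are differentiated under the submultiplicative `linftyOp` norm. `HasDerivAt`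
-- only depends on the topology, which that norm shares with the sup norm, so the results below
-- hold verbatim under the sup norm.
attribute [-instance] Matrix.normedAddCommGroup Matrix.normedSpace
open scoped Norms.Operator

variable [DecidableEq n] {w : ℝ → Matrix n n ℝ} {D : Matrix n n ℝ} {t : ℝ}

theorem HasDerivAt.inv_mul_mul_add_mul_transpose_eq_zero {C : Matrix n n ℝ}
    (hw : HasDerivAt w D t) (hC : ∀ s, w s * C * (w s)ᵀ = C) (hunit : IsUnit (w t).det) :
    (w t)⁻¹ * D * C + C * ((w t)⁻¹ * D)ᵀ = 0 := by
  have hD : D * C * (w t)ᵀ + w t * C * Dᵀ = 0 := by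
    have h := (hw.mul_const C).fun_mul hw.matrix_transpose
    simp only [hC] at h
    exact h.unique (hasDerivAt_const t C)
  have hT : (w t)ᵀ * ((w t)⁻¹)ᵀ = 1 := by
    rw [← transpose_mul, nonsing_inv_mul _ hunit, transpose_one]
  calc (w t)⁻¹ * D * C + C * ((w t)⁻¹ * D)ᵀ
      = (w t)⁻¹ * (D * C * (w t)ᵀ + w t * C * Dᵀ) * ((w t)⁻¹)ᵀ := by
        simp only [Matrix.mul_add, Matrix.add_mul, Matrix.mul_assoc, transpose_mul,
          nonsing_inv_mul_cancel_left _ _ hunit, hT, Matrix.mul_one]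
    _ = 0 := by rw [hD, Matrix.mul_zero, Matrix.zero_mul]

theorem HasDerivAt.mul_inv_mul_eq_zero {K : Matrix n n ℝ} (hw : HasDerivAt w D t)
    (hK : ∀ s, K * w s = K) (hunit : IsUnit (w t).det) : K * ((w t)⁻¹ * D) = 0 := by
  have hKD : K * D = 0 := by
    have h := hw.const_mul K
    simp only [hK] at h
    exact h.unique (hasDerivAt_const t K)
  have hKinv : K * (w t)⁻¹ = K := by
    conv_lhs => rw [← hK t]
    rw [Matrix.mul_assoc, mul_nonsing_inv _ hunit, Matrix.mul_one]
  rw [← Matrix.mul_assoc, hKinv, hKD]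

theorem inv_mul_deriv_mul_exp_smul_add_smul {A B : Matrix n n ℝ} (hAB : Commute A B)
    {φ τ : ℝ → ℝ} {φ' τ' : ℝ} (hw : HasDerivAt w D t) (hφ : HasDerivAt φ φ' t)
    (hτ : HasDerivAt τ τ' t) (hunit : IsUnit (w t).det) :
    (w t * exp (φ t • A + τ t • B))⁻¹ * deriv (fun s => w s * exp (φ s • A + τ s • B)) t =
      (exp (φ t • A + τ t • B))⁻¹ * ((w t)⁻¹ * D) * exp (φ t • A + τ t • B)
        + (φ' • A + τ' • B) := by
  have hG : IsUnit (exp (φ t • A + τ t • B)).det :=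
    (isUnit_iff_isUnit_det _).mp (Matrix.isUnit_exp _)
  have hder : deriv (fun s => w s * exp (φ s • A + τ s • B)) t =
      D * exp (φ t • A + τ t • B) + w t * (exp (φ t • A + τ t • B) * (φ' • A + τ' • B)) :=
    (hw.fun_mul (hasDerivAt_exp_smul_add_smul hAB hφ hτ)).deriv
  rw [hder, Matrix.mul_inv_rev]
  simp only [Matrix.mul_add, Matrix.mul_assoc, nonsing_inv_mul_cancel_left _ _ hunit,
    nonsing_inv_mul_cancel_left _ _ hG]

theorem fixesJhatPhat_exp (a b : ℝ) : FixesJhatPhat (exp (a • Jhat 0 + b • Phat 0)) := by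
  refine ⟨exp_mul_of_mul_eq_zero ?_, mul_exp_of_mul_eq_zero ?_, Commute.exp_left ?_⟩
  · rw [add_mul, smul_mul_assoc, smul_mul_assoc, Jhat_zero_mul_Phat_zero, Phat_zero_mul_self,
      smul_zero, smul_zero, add_zero]
  · rw [mul_add, mul_smul_comm, mul_smul_comm, Phat_zero_mul_Jhat_zero, Phat_zero_mul_self,
      smul_zero, smul_zero, add_zero]
  · exact ((Commute.refl _).smul_left a).add_left (commute_Jhat_zero_Phat_zero.symm.smul_left b)

end MatrixCalculus

/-- Section 5.2: under the gauge transformation w ↦ w·(e^{−ΦJ₀}, TP₀)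
the centre-of-mass symplectic potential ⟨μJ₀ + sP₀, w⁻¹δw⟩ changes by μδT − sδΦ. -/
theorem statement17 (μ s : ℝ) (w : ℝ → Matrix (Fin 4) (Fin 4) ℝ)
    (Φ T : ℝ → ℝ)
    (hw : Differentiable ℝ w) (hwISO : ∀ ε, IsISO (w ε))
    (hΦ : Differentiable ℝ Φ) (hT : Differentiable ℝ T)
    (wt : ℝ → Matrix (Fin 4) (Fin 4) ℝ)
    (hwt : ∀ ε, wt ε = w ε * NormedSpace.exp (-(Φ ε) • Jhat 0 + T ε • Phat 0))
    (ε : ℝ) :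
    pairIso (μ • Jhat 0 + s • Phat 0) ((wt ε)⁻¹ * deriv wt ε)
    = pairIso (μ • Jhat 0 + s • Phat 0) ((w ε)⁻¹ * deriv w ε)
      + μ * deriv T ε - s * deriv Φ ε := by
  set G := exp (-(Φ ε) • Jhat 0 + T ε • Phat 0)
  have hD := (hw ε).hasDerivAt
  have hgauge : (wt ε)⁻¹ * deriv wt ε =
      G⁻¹ * ((w ε)⁻¹ * deriv w ε) * G + (-deriv Φ ε • Jhat 0 + deriv T ε • Phat 0) := by
    obtain rfl := funext hwt
    exact inv_mul_deriv_mul_exp_smul_add_smul (φ := fun t => -Φ t) (τ := T)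
      commute_Jhat_zero_Phat_zero hD (hΦ ε).hasDerivAt.fun_neg (hT ε).hasDerivAt
      (hwISO ε).isUnit_det
  have hG : FixesJhatPhat G := fixesJhatPhat_exp _ _
  have hGinv : FixesJhatPhat G⁻¹ := by
    rw [← Matrix.exp_neg, neg_add, ← neg_smul, ← neg_smul]
    exact fixesJhatPhat_exp _ _
  set Y := (w ε)⁻¹ * deriv w ε
  have hY : Y * ηP + ηP * Yᵀ = 0 :=
    hD.inv_mul_mul_add_mul_transpose_eq_zero (fun t => (hwISO t).mul_ηP_mul_transpose)
      (hwISO ε).isUnit_det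
  have hY3 : single 3 3 1 * Y = 0 :=
    hD.mul_inv_mul_eq_zero (fun t => (hwISO t).single_mul) (hwISO ε).isUnit_det
  have hGG : G⁻¹ * G = 1 := nonsing_inv_mul _ ((isUnit_iff_isUnit_det _).mp (Matrix.isUnit_exp _))
  rw [hgauge, pairIso_add_right, pairIso_conj_of_fixesJhatPhat μ s hG hGinv hGG hY hY3,
    pairIso_Jhat_zero_Phat_zero]
  ring
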